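/- The relation R_Cfg between CES and CESH configurations is a simulation: if cfg₁ ⟶CES cfg₁' and R_Cfg cfg₁ cfg₂, then there exists cfg₂' with cfg₂ ⟶CESH cfg₂' and R_Cfg cfg₁' cfg₂'. -/

import Mathlib

mutual
inductive Instr : Type where
  | var : Nat → Instr
  | clos : Code → Instr
  | appl : Instr
  | lit : Nat → Instr
  | op : (Nat → Nat → Nat) → Instr
inductive Code : Type where
  | seq : Instr → Code → Code
  | cond : Code → Code → Code
  | END : Code
  | RET : Code
end

namespace CES

inductive Value : Type where
  | nat : Nat → Value
  | clos : Code → List Value → Value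

abbrev Env := List Value

inductive StackElem : Type where
  | val : Value → StackElem
  | cont : Code → Env → StackElem

abbrev Stack := List StackElem
abbrev Config := Code × Env × Stack

/-- The CES machine transition relation. -/
inductive Step : Config → Config → Prop where
  | var {n : Nat} {c : Code} {e : Env} {s : Stack} {v : Value} :
      e[n]? = some v →
      Step (.seq (.var n) c, e, s) (c, e, .val v :: s)
  | clos {c' c : Code} {e : Env} {s : Stack} :
      Step (.seq (.clos c') c, e, s) (c, e, .val (.clos c' e) :: s)
  | appl {c c' : Code} {e e' : Env} {v : Value} {s : Stack} :
      Step (.seq .appl c, e, .val v :: .val (.clos c' e') :: s)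
           (c', v :: e', .cont c e :: s)
  | ret {c : Code} {e e' : Env} {v : Value} {s : Stack} :
      Step (.RET, e, .val v :: .cont c e' :: s) (c, e', .val v :: s)
  | lit {n : Nat} {c : Code} {e : Env} {s : Stack} :
      Step (.seq (.lit n) c, e, s) (c, e, .val (.nat n) :: s)
  | op {f : Nat → Nat → Nat} {c : Code} {e : Env} {n₁ n₂ : Nat} {s : Stack} :
      Step (.seq (.op f) c, e, .val (.nat n₁) :: .val (.nat n₂) :: s)
           (c, e, .val (.nat (f n₁ n₂)) :: s)
  | cond0 {c c' : Code} {e : Env} {s : Stack} :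
      Step (.cond c c', e, .val (.nat 0) :: s) (c, e, s)
  | condS {c c' : Code} {e : Env} {n : Nat} {s : Stack} :
      Step (.cond c c', e, .val (.nat (n+1)) :: s) (c', e, s)

end CES

namespace CESH

abbrev Ptr : Type := Nat

inductive Value : Type where
  | nat : Nat → Value
  | clos : Ptr → Value

abbrev Env := List Value
abbrev Closure := Code × Env

inductive StackElem : Type where
  | val : Value → StackElem
  | cont : Closure → StackElem

abbrev Stack := List StackElem
abbrev Heap := List Closure
abbrev Config := Code × Env × Stack × Heap

/-- The CESH machine transition relation, with a list-based heap. -/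
inductive Step : Config → Config → Prop where
  | var {n : Nat} {c : Code} {e : Env} {s : Stack} {h : Heap} {v : Value} :
      e[n]? = some v →
      Step (.seq (.var n) c, e, s, h) (c, e, .val v :: s, h)
  | clos {c' c : Code} {e : Env} {s : Stack} {h : Heap} :
      Step (.seq (.clos c') c, e, s, h)
           (c, e, .val (.clos h.length) :: s, h ++ [(c', e)])
  | appl {c c' : Code} {e e' : Env} {v : Value} {ptr : Ptr} {s : Stack} {h : Heap} :
      h[ptr]? = some (c', e') →
      Step (.seq .appl c, e, .val v :: .val (.clos ptr) :: s, h)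
           (c', v :: e', .cont (c, e) :: s, h)
  | ret {c : Code} {e e' : Env} {v : Value} {s : Stack} {h : Heap} :
      Step (.RET, e, .val v :: .cont (c, e') :: s, h) (c, e', .val v :: s, h)
  | lit {n : Nat} {c : Code} {e : Env} {s : Stack} {h : Heap} :
      Step (.seq (.lit n) c, e, s, h) (c, e, .val (.nat n) :: s, h)
  | op {f : Nat → Nat → Nat} {c : Code} {e : Env} {n₁ n₂ : Nat} {s : Stack} {h : Heap} :
      Step (.seq (.op f) c, e, .val (.nat n₁) :: .val (.nat n₂) :: s, h)
           (c, e, .val (.nat (f n₁ n₂)) :: s, h)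
  | cond0 {c c' : Code} {e : Env} {s : Stack} {h : Heap} :
      Step (.cond c c', e, .val (.nat 0) :: s, h) (c, e, s, h)
  | condS {c c' : Code} {e : Env} {n : Nat} {s : Stack} {h : Heap} :
      Step (.cond c c', e, .val (.nat (n+1)) :: s, h) (c', e, s, h)

end CESH

mutual
/-- Relation between CES values and CESH values, parameterised by the CESH heap:
equal naturals are related, and a CES closure is related to a pointer that
dereferences to a componentwise-related CESH closure. -/
inductive RVal (h : CESH.Heap) : CES.Value → CESH.Value → Prop where
  | nat {n : Nat} : RVal h (.nat n) (.nat n)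
  | clos {c : Code} {e₁ : CES.Env} {e₂ : CESH.Env} {ptr : CESH.Ptr} :
      h[ptr]? = some (c, e₂) → REnv h e₁ e₂ → RVal h (.clos c e₁) (.clos ptr)
/-- Pointwise relation between CES and CESH environments. -/
inductive REnv (h : CESH.Heap) : CES.Env → CESH.Env → Prop where
  | nil : REnv h [] []
  | cons {v₁ : CES.Value} {e₁ : CES.Env} {v₂ : CESH.Value} {e₂ : CESH.Env} :
      RVal h v₁ v₂ → REnv h e₁ e₂ → REnv h (v₁ :: e₁) (v₂ :: e₂)
end

/-- Relation between CES closures and CESH closures: equal code, related environments. -/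
def RClos (h : CESH.Heap) (cl₁ : Code × CES.Env) (cl₂ : CESH.Closure) : Prop :=
  cl₁.1 = cl₂.1 ∧ REnv h cl₁.2 cl₂.2

/-- Relation between CES and CESH stack elements. -/
inductive RStackElem (h : CESH.Heap) : CES.StackElem → CESH.StackElem → Prop where
  | val {v₁ : CES.Value} {v₂ : CESH.Value} :
      RVal h v₁ v₂ → RStackElem h (.val v₁) (.val v₂)
  | cont {c : Code} {e₁ : CES.Env} {e₂ : CESH.Env} :
      REnv h e₁ e₂ → RStackElem h (.cont c e₁) (.cont (c, e₂))

/-- Pointwise relation between stacks. -/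
def RStack (h : CESH.Heap) : CES.Stack → CESH.Stack → Prop :=
  List.Forall₂ (RStackElem h)

/-- The relation between CES and CESH configurations. -/
def RCfg : CES.Config → CESH.Config → Prop :=
  fun cfg₁ cfg₂ =>
    match cfg₁, cfg₂ with
    | (c₁, e₁, s₁), (c₂, e₂, s₂, h) => c₁ = c₂ ∧ REnv h e₁ e₂ ∧ RStack h s₁ s₂

/-!
Each CES step is matched by the CESH step with the same instruction. Only closure creation
touches the heap, and it merely appends, so it suffices that the relations are monotone under
heap extension; for an application the closure pointer on the CESH stack is dereferenced to
the related code and environment.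
-/

def CESH.HeapExtends (h h' : CESH.Heap) : Prop :=
  ∀ ⦃p : CESH.Ptr⦄ ⦃cl : CESH.Closure⦄, h[p]? = some cl → h'[p]? = some cl

theorem CESH.heapExtends_append (h l : CESH.Heap) : CESH.HeapExtends h (h ++ l) :=
  fun _ _ hp => by rw [List.getElem?_append_left (List.getElem?_eq_some_iff.mp hp).1, hp]

section HeapMono

variable {h h' : CESH.Heap}

mutual
theorem RVal.mono (hh : CESH.HeapExtends h h') {v₁ : CES.Value} {v₂ : CESH.Value} :
    RVal h v₁ v₂ → RVal h' v₁ v₂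
  | .nat => .nat
  | .clos hp he => .clos (hh hp) (REnv.mono hh he)

theorem REnv.mono (hh : CESH.HeapExtends h h') {e₁ : CES.Env} {e₂ : CESH.Env} :
    REnv h e₁ e₂ → REnv h' e₁ e₂
  | .nil => .nil
  | .cons hv he => .cons (RVal.mono hh hv) (REnv.mono hh he)
end

theorem RStackElem.mono (hh : CESH.HeapExtends h h') {a : CES.StackElem} {b : CESH.StackElem} :
    RStackElem h a b → RStackElem h' a b
  | .val hv => .val (hv.mono hh)
  | .cont he => .cont (he.mono hh)

theorem RStack.mono (hh : CESH.HeapExtends h h') {s₁ : CES.Stack} {s₂ : CESH.Stack}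
    (hs : RStack h s₁ s₂) : RStack h' s₁ s₂ :=
  hs.imp fun _ _ => RStackElem.mono hh

end HeapMono

theorem REnv.exists_getElem? {h : CESH.Heap} {e₁ : CES.Env} {e₂ : CESH.Env} (he : REnv h e₁ e₂)
    {n : Nat} {v₁ : CES.Value} (hv₁ : e₁[n]? = some v₁) :
    ∃ v₂, e₂[n]? = some v₂ ∧ RVal h v₁ v₂ := by
  induction n generalizing e₁ e₂ with
  | zero =>
    obtain _ | ⟨hv, _⟩ := he
    · simp at hv₁
    · exact ⟨_, rfl, Option.some.inj hv₁ ▸ hv⟩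
  | succ n ih =>
    obtain _ | ⟨_, he⟩ := he
    · simp at hv₁
    · exact ih he hv₁

/-- `RCfg` is a simulation between the CES and CESH machines. -/
theorem RCfg_simulation (cfg₁ cfg₁' : CES.Config) (cfg₂ : CESH.Config)
    (hstep : CES.Step cfg₁ cfg₁') (hR : RCfg cfg₁ cfg₂) :
    ∃ cfg₂', CESH.Step cfg₂ cfg₂' ∧ RCfg cfg₁' cfg₂' := by
  obtain ⟨c, e₂, s₂, h⟩ := cfg₂
  obtain ⟨_, _, _⟩ := cfg₁
  obtain ⟨rfl, he, hs⟩ := hR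
  cases hstep with
  | var hv₁ =>
    obtain ⟨v₂, hv₂, hv⟩ := he.exists_getElem? hv₁
    exact ⟨_, .var hv₂, rfl, he, .cons (.val hv) hs⟩
  | @clos c' =>
    have hh := CESH.heapExtends_append h [(c', e₂)]
    exact ⟨_, .clos, rfl, he.mono hh,
      .cons (.val (.clos List.getElem?_concat_length (he.mono hh))) (hs.mono hh)⟩
  | appl =>
    obtain _ | ⟨⟨hv⟩, _ | ⟨⟨_ | ⟨hp, he'⟩⟩, hs⟩⟩ := hs
    exact ⟨_, .appl hp, rfl, .cons hv he', .cons (.cont he) hs⟩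
  | ret =>
    obtain _ | ⟨⟨hv⟩, _ | ⟨_ | ⟨he'⟩, hs⟩⟩ := hs
    exact ⟨_, .ret, rfl, he', .cons (.val hv) hs⟩
  | lit => exact ⟨_, .lit, rfl, he, .cons (.val .nat) hs⟩
  | op =>
    obtain _ | ⟨⟨⟨⟩⟩, _ | ⟨⟨⟨⟩⟩, hs⟩⟩ := hs
    exact ⟨_, .op, rfl, he, .cons (.val .nat) hs⟩
  | cond0 =>
    obtain _ | ⟨⟨⟨⟩⟩, hs⟩ := hs
    exact ⟨_, .cond0, rfl, he, hs⟩
  | condS =>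
    obtain _ | ⟨⟨⟨⟩⟩, hs⟩ := hs
    exact ⟨_, .condS, rfl, he, hs⟩
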